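/- For 1 ≤ i ≤ n−1 set Θ_i := q·g_i·(1 − X_i X_{i+1}^{−1}) + (1 − q²)·e_i in Ŷ_{r,n}^K. Then: (i) Θ_i² = (1 − q²)²(e_i − 1) + (1 − q² X_i X_{i+1}^{−1})(1 − q² X_{i+1} X_i^{−1}); (ii) Θ_i X_i = X_{i+1} Θ_i; (iii) Θ_i X_{i+1} = X_i Θ_i; (iv) Θ_i X_j = X_j Θ_i for all j ≠ i, i+1. -/

import Mathlib

/- Common setup: the affine Yokonuma-Hecke algebra presented by generators and
relations, reduced words, Bruhat order, affine Hecke algebras (of tensor-product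
type), isotypic components and induced modules. -/

set_option maxHeartbeats 1000000

open scoped TensorProduct

noncomputable section

namespace YH

/-- Generators of the affine Yokonuma-Hecke algebra: `t j` for `j : Fin n`,
`g i` (for `i` with `i+1 < n`, representing the transposition `(i, i+1)` in
0-based indexing), and `X1`, `X1inv` (the generator `X_1` and its inverse). -/
inductive YGen (n : ℕ) : Type
  | t (j : Fin n) : YGen n
  | g (i : ℕ) (h : i + 1 < n) : YGen n
  | X1 : YGen n
  | X1inv : YGen n

variable (K : Type) [Field K] (r n : ℕ) (q : K)

/-- The free algebra on the generators. -/
abbrev FY := FreeAlgebra K (YGen n)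

def tF (j : Fin n) : FY K n := FreeAlgebra.ι K (YGen.t j)
def gF (i : ℕ) (h : i + 1 < n) : FY K n := FreeAlgebra.ι K (YGen.g i h)
def X1F : FY K n := FreeAlgebra.ι K YGen.X1
def X1invF : FY K n := FreeAlgebra.ι K YGen.X1inv

/-- The idempotent `e_i = (1/r) ∑_{s=0}^{r-1} t_i^s t_{i+1}^{-s}` (as an element
of the free algebra, with `t_{i+1}^{-s}` written as `t_{i+1}^{(r-s) % r}`,
using `t^r = 1`). -/
def eF (i : ℕ) (h : i + 1 < n) : FY K n :=
  (r : K)⁻¹ • ∑ s ∈ Finset.range r,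
    tF K n ⟨i, by omega⟩ ^ s * tF K n ⟨i + 1, h⟩ ^ ((r - s) % r)

/-- The simple transposition `s_i = (i, i+1)` of `Fin n` (0-based). -/
def swapi (i : ℕ) (h : i + 1 < n) : Equiv.Perm (Fin n) :=
  Equiv.swap ⟨i, by omega⟩ ⟨i + 1, h⟩

/-- Defining relations of the affine Yokonuma-Hecke algebra `Ŷ_{r,n}(q)` over `K`. -/
inductive YRel : FY K n → FY K n → Prop
  | gg {i j : ℕ} (hi : i + 1 < n) (hj : j + 1 < n) (hij : i + 2 ≤ j ∨ j + 2 ≤ i) :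
      YRel (gF K n i hi * gF K n j hj) (gF K n j hj * gF K n i hi)
  | braid {i : ℕ} (h : i + 2 < n) :
      YRel (gF K n i (by omega) * gF K n (i + 1) h * gF K n i (by omega))
        (gF K n (i + 1) h * gF K n i (by omega) * gF K n (i + 1) h)
  | tt (i j : Fin n) : YRel (tF K n i * tF K n j) (tF K n j * tF K n i)
  | gt {i : ℕ} (hi : i + 1 < n) (j : Fin n) :
      YRel (gF K n i hi * tF K n j) (tF K n (swapi n i hi j) * gF K n i hi)
  | tr (j : Fin n) : YRel (tF K n j ^ r) 1
  | gsq {i : ℕ} (hi : i + 1 < n) :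
      YRel (gF K n i hi * gF K n i hi)
        (1 + (q - q⁻¹) • (eF K r n i hi * gF K n i hi))
  | XXinv : YRel (X1F K n * X1invF K n) 1
  | XinvX : YRel (X1invF K n * X1F K n) 1
  | gXgX (h : 1 < n) :
      YRel (gF K n 0 (by omega) * X1F K n * gF K n 0 (by omega) * X1F K n)
        (X1F K n * gF K n 0 (by omega) * X1F K n * gF K n 0 (by omega))
  | gX {i : ℕ} (hi : i + 1 < n) (h1 : 1 ≤ i) :
      YRel (gF K n i hi * X1F K n) (X1F K n * gF K n i hi)
  | tX (j : Fin n) : YRel (tF K n j * X1F K n) (X1F K n * tF K n j)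

/-- The affine Yokonuma-Hecke algebra `Ŷ_{r,n}^K`. -/
abbrev Y := RingQuot (YRel K r n q)

def mkY : FY K n →ₐ[K] Y K r n q := RingQuot.mkAlgHom K (YRel K r n q)

/-- The generator `t_j` (0-based `j`). -/
def t (j : Fin n) : Y K r n q := mkY K r n q (tF K n j)
/-- The generator `g_i` (0-based `i`, `i+1 < n`). -/
def g (i : ℕ) (h : i + 1 < n) : Y K r n q := mkY K r n q (gF K n i h)
/-- The idempotent `e_i`. -/
def e (i : ℕ) (h : i + 1 < n) : Y K r n q := mkY K r n q (eF K r n i h)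
def X1 : Y K r n q := mkY K r n q (X1F K n)
def X1inv : Y K r n q := mkY K r n q (X1invF K n)

/-- `X_{i+1} := g_i X_i g_i`, recursively. -/
def Xrec : (k : ℕ) → k < n → Y K r n q
  | 0, _ => X1 K r n q
  | k + 1, h => g K r n q k (by omega) * Xrec k (by omega) * g K r n q k (by omega)

/-- The commuting elements `X_j` (0-based `j`). -/
def X (j : Fin n) : Y K r n q := Xrec K r n q j.1 j.2

/-! ### Words and reduced expressions -/

/-- A word in the simple transpositions. -/
abbrev Word := List {i : ℕ // i + 1 < n}

/-- The permutation represented by a word. -/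
def permOfWord (l : Word n) : Equiv.Perm (Fin n) :=
  (l.map fun i => swapi n i.1 i.2).prod

/-- `l` is a reduced word for `w`. -/
def IsReducedWord (l : Word n) (w : Equiv.Perm (Fin n)) : Prop :=
  permOfWord n l = w ∧ ∀ l' : Word n, permOfWord n l' = w → l.length ≤ l'.length

/-- The product `g_{i_1} ⋯ g_{i_k}` along a word. -/
def gword (l : Word n) : Y K r n q := (l.map fun i => g K r n q i.1 i.2).prod

/-- `gw` is the family `w ↦ g_w`, i.e. `g_w` is the product of the `g_i` along
any reduced expression of `w` (well defined by Matsumoto's lemma). -/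
def GwSpec (gw : Equiv.Perm (Fin n) → Y K r n q) : Prop :=
  ∀ (w : Equiv.Perm (Fin n)) (l : Word n), IsReducedWord n l w → gw w = gword K r n q l

/-- Bruhat order: `u ≤ w` iff some reduced word of `w` has a subword which is a
reduced word of `u`. -/
def BruhatLE (u w : Equiv.Perm (Fin n)) : Prop :=
  ∃ l : Word n, IsReducedWord n l w ∧ ∃ l' : Word n, l'.Sublist l ∧ IsReducedWord n l' u

def BruhatLT (u w : Equiv.Perm (Fin n)) : Prop := BruhatLE n u w ∧ u ≠ w

/-! ### Monomials and distinguished subalgebras -/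

/-- `XU` is a family of units lifting the commuting elements `X_j` (each `X_j`
is invertible in `Ŷ_{r,n}^K`). -/
def XUSpec (XU : Fin n → (Y K r n q)ˣ) : Prop :=
  ∀ j, (XU j : Y K r n q) = X K r n q j

/-- The monomial `X^α = X_1^{α_1} ⋯ X_n^{α_n}`, `α ∈ ℤ^n`. -/
def Xpow (XU : Fin n → (Y K r n q)ˣ) (α : Fin n → ℤ) : Y K r n q :=
  ((List.finRange n).map fun j => ((XU j ^ α j : (Y K r n q)ˣ) : Y K r n q)).prod

/-- The monomial `t^β = t_1^{β_1} ⋯ t_n^{β_n}`, `β ∈ (ℤ/rℤ)^n`. -/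
def tpow (β : Fin n → ZMod r) : Y K r n q :=
  ((List.finRange n).map fun j => t K r n q j ^ (β j).val).prod

/-- The subalgebra `KT` generated by `t_1, …, t_n` (the group algebra of
`T = (ℤ/rℤ)^n`). -/
def KT : Subalgebra K (Y K r n q) := Algebra.adjoin K (Set.range (t K r n q))

/-- The Laurent polynomial subalgebra `P_n^K` generated by `X_1^{±1}, …, X_n^{±1}`. -/
def Pn (XU : Fin n → (Y K r n q)ˣ) : Subalgebra K (Y K r n q) :=
  Algebra.adjoin K
    ((Set.range fun j => ((XU j : (Y K r n q)ˣ) : Y K r n q)) ∪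
      (Set.range fun j => (((XU j)⁻¹ : (Y K r n q)ˣ) : Y K r n q)))

/-- The subalgebra `P_n^K(T)` generated by `t_1, …, t_n` and `X_1^{±1}, …, X_n^{±1}`. -/
def PT (XU : Fin n → (Y K r n q)ˣ) : Subalgebra K (Y K r n q) :=
  Algebra.adjoin K
    (Set.range (t K r n q) ∪
      (Set.range fun j => ((XU j : (Y K r n q)ˣ) : Y K r n q)) ∪
      (Set.range fun j => (((XU j)⁻¹ : (Y K r n q)ˣ) : Y K r n q)))

/-- The subalgebra of `Ŷ_{r,n}^K` generated by all `t_j`, all `X_j^{±1}`, and the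
`g_w` for `w` in a set `W` of permutations (e.g. a Young subgroup). -/
def Ysub (XU : Fin n → (Y K r n q)ˣ) (gw : Equiv.Perm (Fin n) → Y K r n q)
    (W : Set (Equiv.Perm (Fin n))) : Subalgebra K (Y K r n q) :=
  Algebra.adjoin K
    (Set.range (t K r n q) ∪
      (Set.range fun j => ((XU j : (Y K r n q)ˣ) : Y K r n q)) ∪
      (Set.range fun j => (((XU j)⁻¹ : (Y K r n q)ˣ) : Y K r n q)) ∪
      (gw '' W))

/-- The Young subgroup `S_μ` attached to a block function `c : Fin n → Fin r`
(for monotone `c`, this is the Young subgroup of the composition `μ` whose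
parts are the fiber sizes of `c`): permutations preserving the blocks. -/
def Smu (c : Fin n → Fin r) : Set (Equiv.Perm (Fin n)) :=
  {w : Equiv.Perm (Fin n) | ∀ j, c (w j) = c j}

/-- Permutations fixing all positions `≥ m` (the subgroup `S_m ⊆ S_n`). -/
def SFix (m : ℕ) : Set (Equiv.Perm (Fin n)) :=
  {w : Equiv.Perm (Fin n) | ∀ j : Fin n, m ≤ j.1 → w j = j}

/-! ### Isotypic components -/

section Modules

variable (M : Type) [AddCommGroup M] [Module K M] [Module (Y K r n q) M]
  [IsScalarTower K (Y K r n q) M]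

/-- The `V(μ)`-isotypic component of `M` as a `KT`-module: since `V(μ)` is the
one-dimensional `KT`-module on which `t_j` acts by the scalar `ζ^{c j}`, this is
the simultaneous eigenspace. Here `ζ` is a primitive `r`-th root of unity and
the simple `K(ℤ/rℤ)`-modules are `V_k : t ↦ ζ^{k}`, `k : Fin r`. -/
def Imu (ζ : K) (c : Fin n → Fin r) : Submodule K M where
  carrier := {m : M | ∀ j : Fin n, t K r n q j • m = ζ ^ ((c j : ℕ)) • m}
  add_mem' := by
    intro a b ha hb
    intro j
    rw [smul_add, ha j, hb j, smul_add]
  zero_mem' := by intro j; simp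
  smul_mem' := by
    intro k m hm
    intro j
    rw [smul_comm, hm j, smul_comm]

/-- `M_μ := ∑_{w ∈ S_n} g_w (I_μ M)`. -/
def Mmu (ζ : K) (c : Fin n → Fin r) (gw : Equiv.Perm (Fin n) → Y K r n q) :
    Submodule K M :=
  Submodule.span K
    {x : M | ∃ w : Equiv.Perm (Fin n), ∃ m ∈ Imu K r n q M ζ c, x = gw w • m}

end Modules

/-! ### Affine Hecke algebras of type A (tensor-product form)

`HH K q n r c` is the tensor product `Ĥ_{μ_1}^K ⊗ ⋯ ⊗ Ĥ_{μ_r}^K` of affine Hecke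
algebras, presented globally: generators `T_i` for those adjacencies `i, i+1`
lying in a common block of `c : Fin n → Fin r`, and invertible `Y_j` for all
`j`.  (For `r = 1` and `c` constant this is the affine Hecke algebra `Ĥ_n^K`.) -/

inductive HGen (n r : ℕ) (c : Fin n → Fin r) : Type
  | T (i : ℕ) (h : i + 1 < n) (hc : c ⟨i, by omega⟩ = c ⟨i + 1, h⟩) : HGen n r c
  | Y (j : Fin n) : HGen n r c
  | Yinv (j : Fin n) : HGen n r c

end YH

namespace YH

variable (K : Type) [Field K] (q : K) {n r : ℕ}

abbrev FH (c : Fin n → Fin r) := FreeAlgebra K (HGen n r c)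

def TFh (c : Fin n → Fin r) (i : ℕ) (h : i + 1 < n)
    (hc : c ⟨i, by omega⟩ = c ⟨i + 1, h⟩) : FH K c :=
  FreeAlgebra.ι K (HGen.T i h hc)
def YFh (c : Fin n → Fin r) (j : Fin n) : FH K c := FreeAlgebra.ι K (HGen.Y j)
def YinvFh (c : Fin n → Fin r) (j : Fin n) : FH K c := FreeAlgebra.ι K (HGen.Yinv j)

/-- Defining relations of the (tensor product of) affine Hecke algebra(s). -/
inductive HRel (c : Fin n → Fin r) : FH K c → FH K c → Prop
  | quad {i : ℕ} (h : i + 1 < n) (hc : c ⟨i, by omega⟩ = c ⟨i + 1, h⟩) :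
      HRel c ((TFh K c i h hc - algebraMap K (FH K c) q) *
          (TFh K c i h hc + algebraMap K (FH K c) q⁻¹)) 0
  | braid {i : ℕ} (h : i + 2 < n)
      (hc1 : c ⟨i, by omega⟩ = c ⟨i + 1, by omega⟩)
      (hc2 : c ⟨i + 1, by omega⟩ = c ⟨i + 2, h⟩) :
      HRel c
        (TFh K c i (by omega) hc1 * TFh K c (i + 1) (by omega) hc2 *
          TFh K c i (by omega) hc1)
        (TFh K c (i + 1) (by omega) hc2 * TFh K c i (by omega) hc1 *
          TFh K c (i + 1) (by omega) hc2)
  | TT {i j : ℕ} (hi : i + 1 < n) (hci : c ⟨i, by omega⟩ = c ⟨i + 1, hi⟩)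
      (hj : j + 1 < n) (hcj : c ⟨j, by omega⟩ = c ⟨j + 1, hj⟩)
      (hij : i + 2 ≤ j ∨ j + 2 ≤ i) :
      HRel c (TFh K c i hi hci * TFh K c j hj hcj)
        (TFh K c j hj hcj * TFh K c i hi hci)
  | YY (j k : Fin n) : HRel c (YFh K c j * YFh K c k) (YFh K c k * YFh K c j)
  | YYinv (j : Fin n) : HRel c (YFh K c j * YinvFh K c j) 1
  | YinvY (j : Fin n) : HRel c (YinvFh K c j * YFh K c j) 1
  | TYT {i : ℕ} (h : i + 1 < n) (hc : c ⟨i, by omega⟩ = c ⟨i + 1, h⟩) :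
      HRel c (TFh K c i h hc * YFh K c ⟨i, by omega⟩ * TFh K c i h hc)
        (YFh K c ⟨i + 1, h⟩)
  | TY {i : ℕ} (h : i + 1 < n) (hc : c ⟨i, by omega⟩ = c ⟨i + 1, h⟩)
      (j : Fin n) (hj1 : j.1 ≠ i) (hj2 : j.1 ≠ i + 1) :
      HRel c (TFh K c i h hc * YFh K c j) (YFh K c j * TFh K c i h hc)

/-- The algebra `Ĥ_{μ_1}^K ⊗ ⋯ ⊗ Ĥ_{μ_r}^K` (for `c` monotone with fiber sizes
`μ_k`); for `r = 1` it is the affine Hecke algebra `Ĥ_n^K` of type `A`. -/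
abbrev HH (c : Fin n → Fin r) := RingQuot (HRel K q c)

def mkH (c : Fin n → Fin r) : FH K c →ₐ[K] HH K q c := RingQuot.mkAlgHom K (HRel K q c)

/-- The generator `T_i` (for an adjacency internal to a block of `c`). -/
def Tg (c : Fin n → Fin r) (i : ℕ) (h : i + 1 < n)
    (hc : c ⟨i, by omega⟩ = c ⟨i + 1, h⟩) : HH K q c :=
  mkH K q c (TFh K c i h hc)
/-- The generator `Y_j`. -/
def Yg (c : Fin n → Fin r) (j : Fin n) : HH K q c := mkH K q c (YFh K c j)
/-- The generator `Y_j^{-1}`. -/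
def Yinvg (c : Fin n → Fin r) (j : Fin n) : HH K q c := mkH K q c (YinvFh K c j)

end YH

namespace YH

variable (K : Type) [Field K] (r n : ℕ) (q : K)

/-! ### Actions and induced modules -/

/-- The action of an algebra `R` on a module `M` as an algebra homomorphism
`R →ₐ[K] End_K(M)`. -/
def actHom (R : Type) [Ring R] [Algebra K R] (M : Type) [AddCommGroup M] [Module K M]
    [Module R M] [IsScalarTower K R M] : R →ₐ[K] Module.End K M where
  toFun a :=
    { toFun := fun m => a • m
      map_add' := fun x y => smul_add a x y
      map_smul' := fun k m => (smul_comm k a m).symm }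
  map_one' := by ext m; exact one_smul R m
  map_mul' a b := by ext m; exact mul_smul a b m
  map_zero' := by ext m; exact zero_smul R m
  map_add' a b := by ext m; exact add_smul a b m
  commutes' k := by
    ext m
    simp [Module.algebraMap_end_apply, algebraMap_smul]

/-- A `K`-space `P` with action `ρ` of an algebra `R` is "simple" if it is
nonzero and has no proper nonzero `ρ`-stable subspace. -/
def SimpleVia {R : Type} [Ring R] [Algebra K R] {P : Type} [AddCommGroup P] [Module K P]
    (ρ : R →ₐ[K] Module.End K P) : Prop :=
  Nontrivial P ∧
    ∀ Q : Submodule K P, (∀ h : R, ∀ v ∈ Q, ρ h v ∈ Q) → Q = ⊥ ∨ Q = ⊤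

/-- The relation submodule defining the induced module
`Ŷ_{r,n}^K ⊗_{Ŷ_{r,μ}^K} (V(μ) ⊗ P)`, where `P` is a module over
`Ĥ_{μ_1}^K ⊗ ⋯ ⊗ Ĥ_{μ_r}^K` (given by `ρ`), and `V(μ)` is the one-dimensional
`KT`-module attached to `c` (and a primitive `r`-th root of unity `ζ`):
we quotient `Ŷ_{r,n}^K ⊗_K P` by the `Ŷ`-span of the relations
`t_j ⊗ p = ζ^{c j} (1 ⊗ p)`, `g_i ⊗ p = 1 ⊗ T_i p` (`i` internal), and
`X_j ⊗ p = 1 ⊗ Y_j p`. -/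
def IndRel (ζ : K) (c : Fin n → Fin r) (P : Type) [AddCommGroup P] [Module K P]
    (ρ : HH K q c →ₐ[K] Module.End K P) :
    Submodule (Y K r n q) (Y K r n q ⊗[K] P) :=
  Submodule.span (Y K r n q)
    ({z : Y K r n q ⊗[K] P | ∃ (j : Fin n) (p : P),
        z = t K r n q j ⊗ₜ[K] p - (1 : Y K r n q) ⊗ₜ[K] (ζ ^ ((c j : ℕ)) • p)} ∪
      {z | ∃ (i : ℕ) (hi : i + 1 < n) (hc : c ⟨i, by omega⟩ = c ⟨i + 1, hi⟩) (p : P),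
        z = g K r n q i hi ⊗ₜ[K] p - (1 : Y K r n q) ⊗ₜ[K] (ρ (Tg K q c i hi hc) p)} ∪
      {z | ∃ (j : Fin n) (p : P),
        z = X K r n q j ⊗ₜ[K] p - (1 : Y K r n q) ⊗ₜ[K] (ρ (Yg K q c j) p)})

/-- The induced `Ŷ_{r,n}^K`-module `S_μ(L.) = Ŷ_{r,n}^K ⊗_{Ŷ_{r,μ}^K} (V(μ) ⊗ P)`. -/
def Ind (ζ : K) (c : Fin n → Fin r) (P : Type) [AddCommGroup P] [Module K P]
    (ρ : HH K q c →ₐ[K] Module.End K P) : Type :=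
  @HasQuotient.Quotient (Y K r n q ⊗[K] P) _
    (@Submodule.hasQuotient (Y K r n q) (Y K r n q ⊗[K] P) _ _ _) (IndRel K r n q ζ c P ρ)

instance (ζ : K) (c : Fin n → Fin r) (P : Type) [AddCommGroup P] [Module K P]
    (ρ : HH K q c →ₐ[K] Module.End K P) : AddCommGroup (Ind K r n q ζ c P ρ) :=
  inferInstanceAs (AddCommGroup (@HasQuotient.Quotient (Y K r n q ⊗[K] P) _
    (@Submodule.hasQuotient (Y K r n q) (Y K r n q ⊗[K] P) _ _ _) (IndRel K r n q ζ c P ρ)))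

instance (ζ : K) (c : Fin n → Fin r) (P : Type) [AddCommGroup P] [Module K P]
    (ρ : HH K q c →ₐ[K] Module.End K P) : Module (Y K r n q) (Ind K r n q ζ c P ρ) :=
  inferInstanceAs (Module (Y K r n q) (@HasQuotient.Quotient (Y K r n q ⊗[K] P) _
    (@Submodule.hasQuotient (Y K r n q) (Y K r n q ⊗[K] P) _ _ _) (IndRel K r n q ζ c P ρ)))

/-- The map skipping position `p`: `j ↦ j` if `j < p`, else `j ↦ j+1`
(the order embedding `Fin (n-1) → Fin n` avoiding `p`). -/
def skipIns (p : ℕ) (j : Fin (n - 1)) : Fin n :=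
  if j.1 < p then ⟨j.1, by have := j.2; omega⟩ else ⟨j.1 + 1, by have := j.2; omega⟩

end YH

/-!
The four identities only involve `g_i`, `e_i`, `X_i`, `X_{i+1}`, and follow from a few relations
among them: the quadratic relation of `g_i`; `e_i` is an idempotent commuting with `g_i`, `X_i`
and `X_{i+1}`; `X_i` and `X_{i+1}` commute; and `X_{i+1} = g_i X_i g_i`. These give the
commutation rules of `g_i` with `X_i^{±1}` and `X_{i+1}^{±1}`, after which (i)–(iii) are a
normal-form computation valid in any algebra. In `Ŷ_{r,n}` the commutativity of the `X_j` comes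
from the braid relations by induction, and `e_i = r⁻¹ ∑_s (t_i t_{i+1}^{-1})^s` is the averaging
idempotent of an element of order dividing `r`, which conjugation by `g_i` inverts. For (iv),
`g_i`, `e_i`, `X_i` and `X_{i+1}` all commute with `X_j`.
-/

section Braid

variable {M : Type*} [Monoid M] {a b x : M}

theorem commute_conj_of_braid (hbr : a * b * a = b * a * b) (hc : Commute b x) :
    Commute a (b * (a * x * a) * b) :=
  calc a * (b * (a * x * a) * b) = a * b * a * x * a * b := by simp only [mul_assoc]
    _ = b * a * (b * x) * a * b := by rw [hbr]; simp only [mul_assoc]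
    _ = b * a * x * (b * a * b) := by rw [hc.eq]; simp only [mul_assoc]
    _ = b * (a * x * a) * b * a := by rw [← hbr]; simp only [mul_assoc]

theorem braidB_conj_of_braid (hbr : a * b * a = b * a * b) (hc : Commute b x)
    (h : a * x * a * x = x * a * x * a) :
    b * (a * x * a) * b * (a * x * a) = a * x * a * b * (a * x * a) * b :=
  calc b * (a * x * a) * b * (a * x * a) = b * a * x * (a * b * a) * x * a := by
        simp only [mul_assoc]
    _ = b * a * (x * b) * a * b * x * a := by rw [hbr]; simp only [mul_assoc]
    _ = b * a * b * x * a * b * x * a := by rw [← hc.eq]; simp only [mul_assoc]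
    _ = a * b * a * x * a * (b * x) * a := by rw [hbr]; simp only [mul_assoc]
    _ = a * b * (a * x * a * x) * b * a := by rw [hc.eq]; simp only [mul_assoc]
    _ = a * b * x * a * x * (a * b * a) := by rw [h]; simp only [mul_assoc]
    _ = a * (b * x) * a * x * b * a * b := by rw [hbr]; simp only [mul_assoc]
    _ = a * x * b * a * (x * b) * a * b := by rw [hc.eq]; simp only [mul_assoc]
    _ = a * x * (b * a * b) * x * a * b := by rw [← hc.eq]; simp only [mul_assoc]
    _ = a * x * a * b * (a * x * a) * b := by rw [← hbr]; simp only [mul_assoc]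

end Braid

section GeomSum

open Finset

theorem pow_sub_mod_eq_pow_pred_mul {M : Type*} [Monoid M] {b : M} {r s : ℕ} (hb : b ^ r = 1)
    (hs : s ≤ r) : b ^ ((r - s) % r) = b ^ ((r - 1) * s) := by
  rw [← pow_eq_pow_mod _ hb]
  refine left_inv_eq_right_inv (a := b ^ s) ?_ ?_
  · rw [← pow_add, Nat.sub_add_cancel hs, hb]
  · rcases r with _ | r
    · rw [Nat.le_zero.mp hs, pow_zero, one_mul]
    · rw [← pow_add, Nat.add_sub_cancel, add_comm, ← Nat.succ_mul, pow_mul, hb, one_pow]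

variable {R : Type*} [Ring R] {u v : R} {r : ℕ}

theorem mul_geom_sum_of_pow_eq_one (hu : u ^ r = 1) :
    u * ∑ s ∈ range r, u ^ s = ∑ s ∈ range r, u ^ s := by
  have h := mul_geom_sum u r
  rwa [hu, sub_self, sub_mul, one_mul, sub_eq_zero] at h

theorem geom_sum_mul_self_of_pow_eq_one (hu : u ^ r = 1) :
    (∑ s ∈ range r, u ^ s) * ∑ s ∈ range r, u ^ s = r • ∑ s ∈ range r, u ^ s := by
  have hpow : ∀ k, u ^ k * ∑ s ∈ range r, u ^ s = ∑ s ∈ range r, u ^ s := by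
    intro k
    induction k with
    | zero => rw [pow_zero, one_mul]
    | succ k ih => rw [pow_succ, mul_assoc, mul_geom_sum_of_pow_eq_one hu, ih]
  rw [sum_mul, sum_congr rfl fun k _ => hpow k, sum_const, card_range]

theorem geom_sum_eq_of_mul_eq_one (hu : u ^ r = 1) (hvu : v * u = 1) :
    ∑ s ∈ range r, v ^ s = ∑ s ∈ range r, u ^ s := by
  -- `v ^ s = u ^ (r - s)`, and reflecting the range turns `∑ u ^ (r - s)` into `u * ∑ u ^ s`.
  have hv : ∀ s ∈ range r, v ^ s = u ^ (r - 1 - s + 1) := fun s hs => by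
    have hsr : s + (r - 1 - s + 1) = r := by have := mem_range.mp hs; omega
    calc v ^ s = v ^ s * u ^ s * u ^ (r - 1 - s + 1) := by
          rw [mul_assoc, ← pow_add, hsr, hu, mul_one]
      _ = u ^ (r - 1 - s + 1) := by rw [pow_mul_pow_eq_one s hvu, one_mul]
  rw [sum_congr rfl hv, sum_range_reflect (fun s => u ^ (s + 1)) r]
  simp only [pow_succ']
  rw [← mul_sum, mul_geom_sum_of_pow_eq_one hu]

theorem isIdempotentElem_inv_smul_geom_sum {K : Type*} [Field K] [Algebra K R]
    (hr : (r : K) ≠ 0) (hu : u ^ r = 1) :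
    IsIdempotentElem ((r : K)⁻¹ • ∑ s ∈ range r, u ^ s) := by
  rw [IsIdempotentElem, smul_mul_smul_comm, geom_sum_mul_self_of_pow_eq_one hu,
    ← Nat.cast_smul_eq_nsmul K, smul_smul, mul_assoc, inv_mul_cancel₀ hr, mul_one]

end GeomSum

theorem mul_mul_eq_of_mul_eq {M : Type*} [Semigroup M] {a b c : M} (h : a * b = c) (z : M) :
    a * (b * z) = c * z := by
  rw [← mul_assoc, h]

/-- The relations satisfied by `G = g_i`, `E = e_i`, `A = X_i`, `B = X_{i+1}`. -/
structure AffineYHRelations {K R : Type*} [Field K] [Ring R] [Algebra K R]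
    (q : K) (G E : R) (A B : Rˣ) : Prop where
  quadratic : G * G = 1 + (q - q⁻¹) • (E * G)
  commute_gen_idem : Commute G E
  idem : IsIdempotentElem E
  commute_idem_left : Commute E A
  commute_idem_right : Commute E B
  commute_units : Commute (A : R) B
  conj : (B : R) = G * A * G

def intertwiner {K R : Type*} [Field K] [Ring R] [Algebra K R] (q : K) (G E : R) (A B : Rˣ) : R :=
  q • (G * (1 - A * ↑B⁻¹)) + (1 - q ^ 2) • E

namespace AffineYHRelations

variable {K R : Type*} [Field K] [Ring R] [Algebra K R] {q : K} {G E : R} {A B : Rˣ}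

theorem gen_mul_gen_sub_smul (h : AffineYHRelations q G E A B) :
    G * (G - (q - q⁻¹) • E) = 1 := by
  rw [mul_sub, h.quadratic, mul_smul_comm, h.commute_gen_idem.eq, add_sub_cancel_right]

theorem gen_mul_left (h : AffineYHRelations q G E A B) :
    G * A = B * G - (q - q⁻¹) • (B * E) :=
  calc G * A = G * A * (G * (G - (q - q⁻¹) • E)) := by rw [h.gen_mul_gen_sub_smul, mul_one]
    _ = B * G - (q - q⁻¹) • (B * E) := by rw [← mul_assoc, h.conj, mul_sub, mul_smul_comm]

theorem gen_mul_right (h : AffineYHRelations q G E A B) :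
    G * B = A * G + (q - q⁻¹) • (E * B) := by
  rw [h.conj, ← mul_assoc, ← mul_assoc, h.quadratic]
  simp only [add_mul, one_mul, smul_mul_assoc, mul_assoc]

theorem gen_mul_inv_right (h : AffineYHRelations q G E A B) :
    G * ↑B⁻¹ = ↑A⁻¹ * G - (q - q⁻¹) • (↑A⁻¹ * E) := by
  have hAG : A * G = G * B - (q - q⁻¹) • (E * B) := by rw [h.gen_mul_right, add_sub_cancel_right]
  calc G * ↑B⁻¹ = ↑A⁻¹ * (A * G * ↑B⁻¹) := by simp only [mul_assoc, Units.inv_mul_cancel_left]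
    _ = ↑A⁻¹ * G - (q - q⁻¹) • (↑A⁻¹ * E) := by
      rw [hAG, sub_mul, smul_mul_assoc, mul_assoc, mul_assoc, Units.mul_inv, mul_one, mul_one,
        mul_sub, mul_smul_comm]

theorem gen_mul_inv_left (h : AffineYHRelations q G E A B) :
    G * ↑A⁻¹ = ↑B⁻¹ * G + (q - q⁻¹) • (↑A⁻¹ * E) := by
  have hBG : B * G = G * A + (q - q⁻¹) • (B * E) := by rw [h.gen_mul_left, sub_add_cancel]
  calc G * ↑A⁻¹ = ↑B⁻¹ * (B * G) * ↑A⁻¹ := by rw [Units.inv_mul_cancel_left]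
    _ = ↑B⁻¹ * G + (q - q⁻¹) • (↑A⁻¹ * E) := by
      rw [hBG]
      simp only [mul_add, add_mul, mul_smul_comm, smul_mul_assoc, mul_assoc, Units.mul_inv,
        mul_one, Units.inv_mul_cancel_left, h.commute_idem_left.units_inv_right.eq]

set_option linter.unusedSimpArgs false in
theorem intertwiner_relations (hq : q ≠ 0) (h : AffineYHRelations q G E A B) :
    (intertwiner q G E A B * intertwiner q G E A B = (1 - q ^ 2) ^ 2 • (E - 1) +
      (1 - q ^ 2 • ((A : R) * ↑B⁻¹)) * (1 - q ^ 2 • ((B : R) * ↑A⁻¹))) ∧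
    intertwiner q G E A B * A = B * intertwiner q G E A B ∧
    intertwiner q G E A B * B = A * intertwiner q G E A B := by
  have hGG := h.quadratic
  have hGA := h.gen_mul_left
  have hGB := h.gen_mul_right
  have hGAi := h.gen_mul_inv_left
  have hGBi := h.gen_mul_inv_right
  have hGE := h.commute_gen_idem.eq
  have hEE := h.idem.eq
  have hEA := h.commute_idem_left.eq
  have hEB := h.commute_idem_right.eq
  have hEAi := h.commute_idem_left.units_inv_right.eq
  have hEBi := h.commute_idem_right.units_inv_right.eq
  have hBA := h.commute_units.symm.eq
  have hBAi := h.commute_units.symm.units_inv_right.eq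
  have hBiA := h.commute_units.units_inv_right.symm.eq
  have hBiAi := h.commute_units.units_inv_right.symm.units_inv_right.eq
  -- Oriented left to right, these rules move `G` to the right of `E`, `E` to the right of the
  -- units and `B^{±1}` to the right of `A^{±1}`; both sides reach the same normal form.
  simp only [intertwiner, mul_sub, sub_mul, mul_add, add_mul, smul_add, smul_sub, smul_smul,
    smul_mul_assoc, mul_smul_comm, mul_assoc, mul_one, one_mul,
    Units.mul_inv_cancel_left, Units.inv_mul_cancel_left, Units.mul_inv, Units.inv_mul,
    hGG, hGA, hGB, hGAi, hGBi, hGE, hEE, hEA, hEB, hEAi, hEBi, hBA, hBAi, hBiA, hBiAi,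
    mul_mul_eq_of_mul_eq hGG, mul_mul_eq_of_mul_eq hGA, mul_mul_eq_of_mul_eq hGB,
    mul_mul_eq_of_mul_eq hGAi, mul_mul_eq_of_mul_eq hGBi, mul_mul_eq_of_mul_eq hGE,
    mul_mul_eq_of_mul_eq hEE, mul_mul_eq_of_mul_eq hEA, mul_mul_eq_of_mul_eq hEB,
    mul_mul_eq_of_mul_eq hEAi, mul_mul_eq_of_mul_eq hEBi, mul_mul_eq_of_mul_eq hBA,
    mul_mul_eq_of_mul_eq hBAi, mul_mul_eq_of_mul_eq hBiA, mul_mul_eq_of_mul_eq hBiAi]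
  refine ⟨?_, ?_, ?_⟩ <;> match_scalars <;> field_simp <;> ring

theorem commute_intertwiner {x : R} (hG : Commute x G) (hE : Commute x E) (hA : Commute x A)
    (hB : Commute x B) : Commute x (intertwiner q G E A B) :=
  (((hG.mul_right ((Commute.one_right x).sub_right
    (hA.mul_right hB.units_inv_right))).smul_right q).add_right (hE.smul_right _))

end AffineYHRelations

namespace YH

open Finset

variable {K : Type} [Field K] {r n : ℕ} {q : K}

theorem mkY_eq_of_rel {a b : FY K n} (h : YRel K r n q a b) :
    mkY K r n q a = mkY K r n q b :=
  RingQuot.mkAlgHom_rel K h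

theorem mkY_mul_eq_of_rel {a b c d : FY K n} (h : YRel K r n q (a * b) (c * d)) :
    mkY K r n q a * mkY K r n q b = mkY K r n q c * mkY K r n q d := by
  simpa only [map_mul] using mkY_eq_of_rel h

theorem commute_t_t (a b : Fin n) : Commute (t K r n q a) (t K r n q b) :=
  mkY_mul_eq_of_rel (YRel.tt a b)

theorem semiconjBy_g_t (i : ℕ) (hi : i + 1 < n) (j : Fin n) :
    SemiconjBy (g K r n q i hi) (t K r n q j) (t K r n q (swapi n i hi j)) :=
  mkY_mul_eq_of_rel (YRel.gt hi j)

theorem t_pow_eq_one (j : Fin n) : t K r n q j ^ r = 1 := by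
  simpa only [t, map_pow, map_one] using mkY_eq_of_rel (q := q) (YRel.tr (r := r) j)

theorem commute_g_g {i j : ℕ} (hi : i + 1 < n) (hj : j + 1 < n) (hij : i + 2 ≤ j ∨ j + 2 ≤ i) :
    Commute (g K r n q i hi) (g K r n q j hj) :=
  mkY_mul_eq_of_rel (YRel.gg hi hj hij)

theorem g_braid (i : ℕ) (h : i + 2 < n) :
    g K r n q i (by omega) * g K r n q (i + 1) h * g K r n q i (by omega) =
      g K r n q (i + 1) h * g K r n q i (by omega) * g K r n q (i + 1) h := by
  simpa only [g, map_mul] using mkY_eq_of_rel (q := q) (YRel.braid (r := r) h)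

theorem g_mul_g (i : ℕ) (hi : i + 1 < n) :
    g K r n q i hi * g K r n q i hi = 1 + (q - q⁻¹) • (e K r n q i hi * g K r n q i hi) := by
  simpa only [g, e, map_mul, map_add, map_one, map_smul] using
    mkY_eq_of_rel (q := q) (YRel.gsq (r := r) hi)

theorem g_X1_g_X1 (h : 1 < n) :
    g K r n q 0 (by omega) * X1 K r n q * g K r n q 0 (by omega) * X1 K r n q =
      X1 K r n q * g K r n q 0 (by omega) * X1 K r n q * g K r n q 0 (by omega) := by
  simpa only [g, X1, map_mul] using mkY_eq_of_rel (q := q) (YRel.gXgX (r := r) h)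

theorem commute_g_X1 (i : ℕ) (hi : i + 1 < n) (h1 : 1 ≤ i) :
    Commute (g K r n q i hi) (X1 K r n q) :=
  mkY_mul_eq_of_rel (YRel.gX hi h1)

theorem commute_t_X1 (j : Fin n) : Commute (t K r n q j) (X1 K r n q) :=
  mkY_mul_eq_of_rel (YRel.tX j)

theorem Xrec_succ (k : ℕ) (h : k + 1 < n) :
    Xrec K r n q (k + 1) h = g K r n q k h * Xrec K r n q k (by omega) * g K r n q k h :=
  rfl

theorem commute_g_Xrec_of_lt {k : ℕ} (hk : k + 1 < n) :
    ∀ (j : ℕ) (hj : j < n), j < k → Commute (g K r n q k hk) (Xrec K r n q j hj)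
  | 0, _, hjk => commute_g_X1 k hk hjk
  | j + 1, hj, hjk =>
    have hgg := commute_g_g (K := K) (r := r) (q := q) hk hj (Or.inr (by omega))
    (hgg.mul_right (commute_g_Xrec_of_lt hk j (by omega) (by omega))).mul_right hgg

theorem g_Xrec_g_Xrec : ∀ (j : ℕ) (hj : j + 1 < n),
    g K r n q j hj * Xrec K r n q j (by omega) * g K r n q j hj * Xrec K r n q j (by omega) =
      Xrec K r n q j (by omega) * g K r n q j hj * Xrec K r n q j (by omega) * g K r n q j hj
  | 0, hj => g_X1_g_X1 hj
  | j + 1, hj => braidB_conj_of_braid (g_braid j hj)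
      (commute_g_Xrec_of_lt hj j (by omega) (by omega)) (g_Xrec_g_Xrec j (by omega))

theorem commute_g_Xrec_of_add_two_le {k : ℕ} (hk : k + 1 < n) :
    ∀ (j : ℕ) (hj : j < n), k + 2 ≤ j → Commute (g K r n q k hk) (Xrec K r n q j hj)
  | 0, _, hkj => absurd hkj (by omega)
  | j + 1, hj, hkj => by
    rcases Nat.lt_or_ge (k + 2) (j + 1) with hlt | hge
    · have hgg := commute_g_g (K := K) (r := r) (q := q) hk (by omega : j + 1 < n)
        (Or.inl (by omega))
      exact (hgg.mul_right (commute_g_Xrec_of_add_two_le hk j (by omega) (by omega))).mul_right hgg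
    · obtain rfl : j = k + 1 := by omega
      exact commute_conj_of_braid (g_braid k hj) (commute_g_Xrec_of_lt hj k (by omega) (Nat.lt_succ_self k))

theorem commute_g_Xrec {i k : ℕ} (hi : i + 1 < n) (hk : k < n) (hki : k ≠ i) (hki' : k ≠ i + 1) :
    Commute (g K r n q i hi) (Xrec K r n q k hk) := by
  rcases Nat.lt_or_ge k i with h | h
  · exact commute_g_Xrec_of_lt hi k hk h
  · exact commute_g_Xrec_of_add_two_le hi k hk (by omega)

theorem commute_Xrec_Xrec_of_lt :
    ∀ (j k : ℕ) (hj : j < n) (hk : k < n), j < k →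
      Commute (Xrec K r n q j hj) (Xrec K r n q k hk)
  | _, 0, _, _, hjk => absurd hjk (Nat.not_lt_zero _)
  | j, k + 1, hj, hk, hjk => by
    rcases Nat.lt_or_ge j k with hlt | hge
    · have hg := (commute_g_Xrec_of_lt (K := K) (r := r) (q := q) hk j hj hlt).symm
      exact (hg.mul_right (commute_Xrec_Xrec_of_lt j k hj (by omega) hlt)).mul_right hg
    · obtain rfl : j = k := by omega
      simpa only [Commute, SemiconjBy, Xrec_succ, mul_assoc] using (g_Xrec_g_Xrec j hk).symm

theorem commute_Xrec_Xrec (j k : ℕ) (hj : j < n) (hk : k < n) :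
    Commute (Xrec K r n q j hj) (Xrec K r n q k hk) := by
  rcases lt_trichotomy j k with h | rfl | h
  · exact commute_Xrec_Xrec_of_lt j k hj hk h
  · exact Commute.refl _
  · exact (commute_Xrec_Xrec_of_lt k j hk hj h).symm

theorem commute_t_Xrec : ∀ (k : ℕ) (hk : k < n) (j : Fin n),
    Commute (t K r n q j) (Xrec K r n q k hk)
  | 0, _, j => commute_t_X1 j
  | k + 1, hk, j => by
    have hσ : swapi n k hk (swapi n k hk j) = j := Equiv.swap_apply_self _ _ _
    have h₁ : g K r n q k hk * t K r n q (swapi n k hk j) = t K r n q j * g K r n q k hk := by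
      have h := semiconjBy_g_t (K := K) (r := r) (q := q) k hk (swapi n k hk j)
      rwa [hσ] at h
    have h₂ := semiconjBy_g_t (K := K) (r := r) (q := q) k hk j
    show _ * _ = _ * _
    calc t K r n q j * Xrec K r n q (k + 1) hk
        = t K r n q j * g K r n q k hk * Xrec K r n q k (by omega) * g K r n q k hk := by
          rw [Xrec_succ]; simp only [mul_assoc]
      _ = g K r n q k hk * (t K r n q (swapi n k hk j) * Xrec K r n q k (by omega)) *
            g K r n q k hk := by rw [← h₁]; simp only [mul_assoc]
      _ = g K r n q k hk * Xrec K r n q k (by omega) *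
            (t K r n q (swapi n k hk j) * g K r n q k hk) := by
          rw [(commute_t_Xrec k (by omega) _).eq]; simp only [mul_assoc]
      _ = Xrec K r n q (k + 1) hk * t K r n q j := by
          rw [← h₂.eq, Xrec_succ]; simp only [mul_assoc]

theorem e_eq_geom_sum (i : ℕ) (hi : i + 1 < n) :
    e K r n q i hi = (r : K)⁻¹ • ∑ s ∈ range r,
      (t K r n q ⟨i, by omega⟩ * t K r n q ⟨i + 1, hi⟩ ^ (r - 1)) ^ s := by
  rw [e, eF, map_smul, map_sum]
  congr 1
  refine sum_congr rfl fun s hs => ?_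
  rw [map_mul, map_pow, map_pow, ((commute_t_t _ _).pow_right _).mul_pow, ← pow_mul]
  exact congrArg (t K r n q ⟨i, by omega⟩ ^ s * ·)
    (pow_sub_mod_eq_pow_pred_mul (t_pow_eq_one _) (mem_range.mp hs).le)

theorem t_mul_t_pow_pred_pow_eq_one (a b : Fin n) :
    (t K r n q a * t K r n q b ^ (r - 1)) ^ r = 1 := by
  rw [((commute_t_t _ _).pow_right _).mul_pow, ← pow_mul, mul_comm, pow_mul, t_pow_eq_one,
    t_pow_eq_one, one_pow, one_mul]

theorem t_mul_t_pow_pred_mul_t_mul_t_pow_pred (hr : 0 < r) (a b : Fin n) :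
    t K r n q b * t K r n q a ^ (r - 1) * (t K r n q a * t K r n q b ^ (r - 1)) = 1 := by
  rw [mul_assoc, ← mul_assoc (t K r n q a ^ (r - 1)), pow_sub_one_mul hr.ne', t_pow_eq_one,
    one_mul, mul_pow_sub_one hr.ne', t_pow_eq_one]

theorem commute_g_e (i : ℕ) (hi : i + 1 < n) : Commute (g K r n q i hi) (e K r n q i hi) := by
  rcases r.eq_zero_or_pos with rfl | hr
  · simp [e_eq_geom_sum]
  have hswap : SemiconjBy (g K r n q i hi)
      (t K r n q ⟨i, by omega⟩ * t K r n q ⟨i + 1, hi⟩ ^ (r - 1))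
      (t K r n q ⟨i + 1, hi⟩ * t K r n q ⟨i, by omega⟩ ^ (r - 1)) := by
    have h₁ := semiconjBy_g_t (K := K) (r := r) (q := q) i hi ⟨i, by omega⟩
    have h₂ := semiconjBy_g_t (K := K) (r := r) (q := q) i hi ⟨i + 1, hi⟩
    rw [swapi, Equiv.swap_apply_left] at h₁
    rw [swapi, Equiv.swap_apply_right] at h₂
    exact h₁.mul_right (h₂.pow_right _)
  rw [e_eq_geom_sum]
  refine Commute.smul_right ?_ _
  show _ * _ = _ * _
  rw [mul_sum, ← geom_sum_eq_of_mul_eq_one (t_mul_t_pow_pred_pow_eq_one _ _)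
    (t_mul_t_pow_pred_mul_t_mul_t_pow_pred hr _ _), sum_mul]
  exact sum_congr rfl fun s _ => (hswap.pow_right s).eq

theorem isIdempotentElem_e (hr : (r : K) ≠ 0) (i : ℕ) (hi : i + 1 < n) :
    IsIdempotentElem (e K r n q i hi) := by
  rw [e_eq_geom_sum]
  exact isIdempotentElem_inv_smul_geom_sum hr (t_mul_t_pow_pred_pow_eq_one _ _)

theorem commute_e_Xrec (i : ℕ) (hi : i + 1 < n) (k : ℕ) (hk : k < n) :
    Commute (e K r n q i hi) (Xrec K r n q k hk) := by
  rw [e_eq_geom_sum]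
  refine Commute.smul_left (Commute.sum_left _ _ _ fun s _ => Commute.pow_left ?_ s) _
  exact (commute_t_Xrec k hk _).mul_left ((commute_t_Xrec k hk _).pow_left _)

end YH

/-- Lemma 5.1 of the paper: the intertwining elements
`Θ_i = q g_i (1 - X_i X_{i+1}⁻¹) + (1 - q²) e_i` satisfy
`Θ_i² = (1-q²)²(e_i - 1) + (1 - q² X_i X_{i+1}⁻¹)(1 - q² X_{i+1} X_i⁻¹)`,
`Θ_i X_i = X_{i+1} Θ_i`, `Θ_i X_{i+1} = X_i Θ_i`, and `Θ_i X_j = X_j Θ_i` for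
`j ≠ i, i+1`. -/
theorem statement15 (K : Type) [Field K] (r n : ℕ)
    (hrK : (r : K) ≠ 0) (q : K) (hq : q ≠ 0)
    (XU : Fin n → (YH.Y K r n q)ˣ) (hXU : YH.XUSpec K r n q XU)
    (i : ℕ) (hi : i + 1 < n) (Θ : YH.Y K r n q)
    (hΘ : Θ = q • (YH.g K r n q i hi *
        (1 - (XU ⟨i, by omega⟩ : YH.Y K r n q) *
          (((XU ⟨i + 1, hi⟩)⁻¹ : (YH.Y K r n q)ˣ) : YH.Y K r n q))) +
      (1 - q ^ 2) • YH.e K r n q i hi) :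
    (Θ * Θ = (1 - q ^ 2) ^ 2 • (YH.e K r n q i hi - 1) +
        (1 - q ^ 2 • ((XU ⟨i, by omega⟩ : YH.Y K r n q) *
          (((XU ⟨i + 1, hi⟩)⁻¹ : (YH.Y K r n q)ˣ) : YH.Y K r n q))) *
        (1 - q ^ 2 • ((XU ⟨i + 1, hi⟩ : YH.Y K r n q) *
          (((XU ⟨i, by omega⟩)⁻¹ : (YH.Y K r n q)ˣ) : YH.Y K r n q)))) ∧
    Θ * YH.X K r n q ⟨i, by omega⟩ = YH.X K r n q ⟨i + 1, hi⟩ * Θ ∧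
    Θ * YH.X K r n q ⟨i + 1, hi⟩ = YH.X K r n q ⟨i, by omega⟩ * Θ ∧
    ∀ j : Fin n, j.1 ≠ i → j.1 ≠ i + 1 →
      Θ * YH.X K r n q j = YH.X K r n q j * Θ := by
  have hX : ∀ j, (XU j : YH.Y K r n q) = YH.X K r n q j := hXU
  have h : AffineYHRelations q (YH.g K r n q i hi) (YH.e K r n q i hi)
      (XU ⟨i, by omega⟩) (XU ⟨i + 1, hi⟩) :=
    { quadratic := YH.g_mul_g i hi
      commute_gen_idem := YH.commute_g_e i hi
      idem := YH.isIdempotentElem_e hrK i hi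
      commute_idem_left := by rw [hX]; exact YH.commute_e_Xrec i hi i _
      commute_idem_right := by rw [hX]; exact YH.commute_e_Xrec i hi (i + 1) hi
      commute_units := by rw [hX, hX]; exact YH.commute_Xrec_Xrec i (i + 1) _ hi
      conj := by rw [hX, hX]; rfl }
  obtain ⟨hsq, hleft, hright⟩ := h.intertwiner_relations hq
  subst hΘ
  refine ⟨hsq, ?_, ?_, fun j hj hj' => ?_⟩
  · rwa [← hX, ← hX]
  · rwa [← hX, ← hX]
  · refine (AffineYHRelations.commute_intertwiner (YH.commute_g_Xrec hi j.2 hj hj').symm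
      (YH.commute_e_Xrec i hi j j.2).symm ?_ ?_).eq.symm <;> rw [hX]
    exacts [YH.commute_Xrec_Xrec j i j.2 _, YH.commute_Xrec_Xrec j (i + 1) j.2 hi]
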